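/- arXiv:1804.00479 — 3 statements merged into one kernel-verified Lean document; each statement's English description precedes it below -/
import Mathlib

section
/- The greatest common divisor of the entries in a column of a skew-symmetrizable exchange matrix is invariant under matrix mutation: if B = (b_{ij}) is an n×n integer matrix and B' = μ_k(B) is its mutation in direction k (defined by b'_{ij} = -b_{ij} if i=k or j=k, and b'_{ij} = b_{ij} + (|b_{ik}| b_{kj} + b_{ik} |b_{kj}|)/2 otherwise), then for every column index j, gcd(b_{ij} : 1 ≤ i ≤ n) = gcd(b'_{ij} : 1 ≤ i ≤ n). -/
/-- Matrix mutation in direction `k`. -/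
def matMutation {n : ℕ} (B : Matrix (Fin n) (Fin n) ℤ) (k : Fin n) :
    Matrix (Fin n) (Fin n) ℤ :=
  fun i j => if i = k ∨ j = k then -B i j
    else B i j + Int.sign (B i k) * max (B i k * B k j) 0

/-- The gcd of the entries in each column of an exchange matrix is invariant
under matrix mutation. -/
theorem column_gcd_mutation_invariant {n : ℕ} (B : Matrix (Fin n) (Fin n) ℤ)
    (k : Fin n) (j : Fin n) :
    Finset.univ.gcd (fun i => matMutation B k i j) =
      Finset.univ.gcd (fun i => B i j) := by
  have hterm : ∀ (d : ℤ) (i : Fin n), d ∣ B k j →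
      d ∣ Int.sign (B i k) * max (B i k * B k j) 0 := by
    intro d i hd
    apply Dvd.dvd.mul_left
    rcases max_choice (B i k * B k j) 0 with h | h <;> rw [h]
    · exact Dvd.dvd.mul_left hd _
    · exact dvd_zero d
  apply dvd_antisymm_of_normalize_eq Finset.normalize_gcd Finset.normalize_gcd
  · apply Finset.dvd_gcd
    intro i _
    have hk : Finset.univ.gcd (fun i => matMutation B k i j) ∣ B k j := by
      have h := Finset.gcd_dvd (Finset.mem_univ k)
        (f := fun i => matMutation B k i j)
      simp only [matMutation, if_pos (Or.inl rfl)] at h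
      exact (dvd_neg).mp h
    have hi := Finset.gcd_dvd (Finset.mem_univ i)
      (f := fun i => matMutation B k i j)
    by_cases h : i = k ∨ j = k
    · simp only [matMutation, if_pos h] at hi
      exact (dvd_neg).mp hi
    · simp only [matMutation, if_neg h] at hi
      have := dvd_sub hi (hterm _ i hk)
      simpa [matMutation] using this
  · apply Finset.dvd_gcd
    intro i _
    have hk := Finset.gcd_dvd (Finset.mem_univ k) (f := fun i => B i j)
    have hi := Finset.gcd_dvd (Finset.mem_univ i) (f := fun i => B i j)
    simp only [matMutation]
    split
    · exact (dvd_neg).mpr hi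
    · exact dvd_add hi (hterm _ i hk)
end

section
/- Every entry of every column of the exchange matrix B_ce = [[0,2,2,4],[-2,0,-6,2],[-2,6,0,-2],[-4,-2,2,0]] is divisible by 2, and in fact the gcd of the entries of each column equals 2. Consequently, by the mutation-invariance of column gcds, every matrix obtained from B_ce by any finite sequence of mutations has all entries even; in particular no matrix in the mutation class of B_ce has any entry equal to ±1. -/
/-- The exchange matrix of the counterexample quiver `Q_ce`. -/
def Bce : Matrix (Fin 4) (Fin 4) ℤ :=
  !![0, 2, 2, 4; -2, 0, -6, 2; -2, 6, 0, -2; -4, -2, 2, 0]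

lemma matMutation_even {n : ℕ} (B : Matrix (Fin n) (Fin n) ℤ)
    (h : ∀ i j, 2 ∣ B i j) (k i j : Fin n) : 2 ∣ matMutation B k i j := by
  unfold matMutation
  split
  · exact (h i j).neg_right
  · refine (h i j).add (Dvd.dvd.mul_left ?_ _)
    rcases max_choice (B i k * B k j) 0 with hm | hm <;> rw [hm]
    · exact (h i k).mul_right _
    · exact dvd_zero 2

lemma foldl_even : ∀ (L : List (Fin 4)) (B : Matrix (Fin 4) (Fin 4) ℤ),
    (∀ i j, 2 ∣ B i j) → ∀ i j, 2 ∣ (L.foldl matMutation B) i j := by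
  intro L
  induction L with
  | nil => intro B h; exact h
  | cons k L ih =>
      intro B h i j
      exact ih _ (matMutation_even B h k) i j

/-- Every column of `B_ce` has gcd `2`; moreover every matrix in the mutation
class of `B_ce` (obtained by a finite sequence of mutations) has all entries
even, and in particular has no entry equal to `1` or `-1`. -/
theorem Bce_columns_gcd_two_and_mutation_class_even :
    (∀ j : Fin 4, Finset.univ.gcd (fun i => Bce i j) = 2) ∧
    (∀ L : List (Fin 4), ∀ i j : Fin 4,
      2 ∣ (L.foldl matMutation Bce) i j ∧
      (L.foldl matMutation Bce) i j ≠ 1 ∧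
      (L.foldl matMutation Bce) i j ≠ -1) := by
  constructor
  · decide
  · intro L i j
    have hBce : ∀ i j : Fin 4, 2 ∣ Bce i j := by
      intro i j; fin_cases i <;> fin_cases j <;> norm_num [Bce]
    have h := foldl_even L Bce hBce i j
    refine ⟨h, ?_, ?_⟩
    · intro he; rw [he] at h; norm_num at h
    · intro he; rw [he] at h; norm_num at h
end

section
/- In the Laurent polynomial ring R[x₁^{±1},...,x₇^{±1}] with grading deg(x₁)=2, deg(xᵢ)=1 for i ≥ 2, the element Z = (y₂y₃x₂² + x₃² + y₂x₁)/(x₁x₂) is homogeneous of degree -1 and is not contained in the subring R[x₁,...,x₇]. -/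
open MvPolynomial

/-- Variables: `Fin.castAdd 7 i` is `xᵢ₊₁` (so `X 0 = x₁, X 1 = x₂, X 2 = x₃, …`)
and `Fin.natAdd 7 j` is `yⱼ₊₁` (so `X 8 = y₂, X 9 = y₃`). -/
noncomputable def wt : Fin 14 → ℤ := fun i =>
  if (i : ℕ) = 0 then 2 else if (i : ℕ) < 7 then 1 else 0

/-- The numerator `y₂y₃x₂² + x₃² + y₂x₁` of `Z`. -/
noncomputable def Znum : MvPolynomial (Fin 14) ℤ :=
  X 8 * X 9 * X 1 ^ 2 + X 2 ^ 2 + X 8 * X 0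

noncomputable def Ypoly : MvPolynomial (Fin 14) ℤ :=
  ∏ j : Fin 7, X (Fin.natAdd 7 j)

noncomputable def Tsub : Subring (FractionRing (MvPolynomial (Fin 14) ℤ)) where
  carrier := {z | ∃ (p : MvPolynomial (Fin 14) ℤ) (k : ℕ),
    z * algebraMap (MvPolynomial (Fin 14) ℤ) _ Ypoly ^ k
      = algebraMap (MvPolynomial (Fin 14) ℤ) _ p}
  one_mem' := ⟨1, 0, by simp⟩
  zero_mem' := ⟨0, 0, by simp⟩
  mul_mem' := by
    rintro a b ⟨p, k, hp⟩ ⟨q, l, hq⟩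
    exact ⟨p * q, k + l, by rw [map_mul, ← hp, ← hq]; ring⟩
  add_mem' := by
    rintro a b ⟨p, k, hp⟩ ⟨q, l, hq⟩
    refine ⟨p * Ypoly ^ l + q * Ypoly ^ k, k + l, ?_⟩
    rw [map_add, map_mul, map_mul, map_pow, map_pow, ← hp, ← hq]; ring
  neg_mem' := by
    rintro a ⟨p, k, hp⟩
    exact ⟨-p, k, by rw [map_neg, ← hp]; ring⟩

/-- In the graded Laurent polynomial ring with `deg x₁ = 2`, `deg xᵢ = 1`
(`i ≥ 2`), `deg yⱼ = 0`, the element `Z = (y₂y₃x₂² + x₃² + y₂x₁)/(x₁x₂)` is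
homogeneous of degree `-1 = 2 - 3` (its numerator is homogeneous of degree `2`
and its denominator `x₁x₂` of degree `3`), and `Z` is not contained in the
subring `R[x₁,…,x₇]` generated by the `xᵢ`, the `yⱼ` and their inverses. -/
theorem X7_upper_element_not_in_cluster_algebra :
    IsWeightedHomogeneous wt Znum 2 ∧
    IsWeightedHomogeneous wt (X 0 * X 1 : MvPolynomial (Fin 14) ℤ) 3 ∧
    (2 - 3 : ℤ) = -1 ∧
    (letI F := FractionRing (MvPolynomial (Fin 14) ℤ)
     letI φ := algebraMap (MvPolynomial (Fin 14) ℤ) F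
     φ Znum / (φ (X 0) * φ (X 1)) ∉
       Subring.closure
         ((Set.range fun i : Fin 7 => φ (X (Fin.castAdd 7 i))) ∪
          (Set.range fun j : Fin 7 => φ (X (Fin.natAdd 7 j))) ∪
          (Set.range fun j : Fin 7 => (φ (X (Fin.natAdd 7 j)))⁻¹))) := by
  have hX : ∀ i : Fin 14, IsWeightedHomogeneous wt (X i : MvPolynomial (Fin 14) ℤ) (wt i) :=
    fun i => isWeightedHomogeneous_X ℤ wt i
  have fv : ((8 : Fin 14) : ℕ) = 8 ∧ ((9 : Fin 14) : ℕ) = 9 ∧ ((1 : Fin 14) : ℕ) = 1 ∧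
      ((2 : Fin 14) : ℕ) = 2 ∧ ((0 : Fin 14) : ℕ) = 0 := by decide
  refine ⟨?_, ?_, by norm_num, ?_⟩
  · have hZ : Znum = X 8 * X 9 * (X 1 * X 1) + X 2 * X 2 + X 8 * X 0 := by
      rw [Znum]; ring
    have h1 := ((hX 8).mul (hX 9)).mul ((hX 1).mul (hX 1))
    have h2 := (hX 2).mul (hX 2)
    have h3 := (hX 8).mul (hX 0)
    have e1 : wt 8 + wt 9 + (wt 1 + wt 1) = 2 := by norm_num [wt, fv.1, fv.2.1, fv.2.2.1, fv.2.2.2.1, fv.2.2.2.2]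
    have e2 : wt 2 + wt 2 = 2 := by norm_num [wt, fv.1, fv.2.1, fv.2.2.1, fv.2.2.2.1, fv.2.2.2.2]
    have e3 : wt 8 + wt 0 = 2 := by norm_num [wt, fv.1, fv.2.1, fv.2.2.1, fv.2.2.2.1, fv.2.2.2.2]
    rw [e1] at h1; rw [e2] at h2; rw [e3] at h3
    rw [hZ]
    exact (h1.add h2).add h3
  · have h := (hX 0).mul (hX 1)
    have e : wt 0 + wt 1 = 3 := by norm_num [wt, fv.1, fv.2.1, fv.2.2.1, fv.2.2.2.1, fv.2.2.2.2]
    rwa [e] at h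
  · intro hmem
    set F := FractionRing (MvPolynomial (Fin 14) ℤ)
    set φ := algebraMap (MvPolynomial (Fin 14) ℤ) F with hφ
    have hinj : Function.Injective φ := IsFractionRing.injective _ _
    have hclos : Subring.closure
         ((Set.range fun i : Fin 7 => φ (X (Fin.castAdd 7 i))) ∪
          (Set.range fun j : Fin 7 => φ (X (Fin.natAdd 7 j))) ∪
          (Set.range fun j : Fin 7 => (φ (X (Fin.natAdd 7 j)))⁻¹)) ≤ Tsub := by
      rw [Subring.closure_le]
      rintro z (( ⟨i, rfl⟩ | ⟨j, rfl⟩) | ⟨j, rfl⟩)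
      · exact ⟨X (Fin.castAdd 7 i), 0, by simp; rfl⟩
      · exact ⟨X (Fin.natAdd 7 j), 0, by simp; rfl⟩
      · refine ⟨∏ j' ∈ Finset.univ.erase j, X (Fin.natAdd 7 j'), 1, ?_⟩
        have hy0 : φ (X (Fin.natAdd 7 j)) ≠ 0 := fun h => X_ne_zero _ (hinj (by simpa using h))
        have : Ypoly = X (Fin.natAdd 7 j) * ∏ j' ∈ Finset.univ.erase j, X (Fin.natAdd 7 j') :=
          (Finset.mul_prod_erase _ _ (Finset.mem_univ j)).symm
        rw [this, pow_one, map_mul, ← mul_assoc, inv_mul_cancel₀ hy0, one_mul]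
    obtain ⟨p, k, hp⟩ := hclos hmem
    have hx0 : φ (X 0) ≠ 0 := fun h => X_ne_zero _ (hinj (by simpa using h))
    have hx1 : φ (X 1) ≠ 0 := fun h => X_ne_zero _ (hinj (by simpa using h))
    rw [div_mul_eq_mul_div, div_eq_iff (mul_ne_zero hx0 hx1)] at hp
    have hpoly : Znum * Ypoly ^ k = p * (X 0 * X 1) := by
      apply hinj
      rw [map_mul, map_mul, map_mul, map_pow]
      exact hp
    have := congrArg (eval (fun i : Fin 14 => if (i : ℕ) = 0 then (0 : ℤ) else 1)) hpoly
    simp [Znum, Ypoly, show ((8 : Fin 14) : ℕ) = 8 from rfl,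
      show ((9 : Fin 14) : ℕ) = 9 from rfl, show ((1 : Fin 14) : ℕ) = 1 from rfl,
      show ((2 : Fin 14) : ℕ) = 2 from rfl, show ((0 : Fin 14) : ℕ) = 0 from rfl] at this
    rw [Finset.prod_eq_one (fun x _ => if_neg (fun h => absurd (congrArg Fin.val h) (by rw [Fin.val_addNat]; exact Nat.succ_ne_zero _)))] at this
    simp at this
end
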